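/- Let X, A ∈ {0,1}, and potential outcomes Y₀, Y₁ satisfy strong ignorability given X: {Y₀,Y₁} ⫫ A | X, with positivity 0 < e(X) < 1 where e(X) = P(A=1|X). Then ignorability also holds given the propensity score: {Y₀,Y₁} ⫫ A | e(X). -/
import Mathlib


open Classical in
noncomputable def Pr {Ω : Type*} [Fintype Ω] (w : Ω → ℝ) (p : Ω → Prop) : ℝ :=
  ∑ ω : Ω, if p ω then w ω else 0

section Aux
variable {Ω 𝒳 : Type*} [Fintype Ω] [Fintype 𝒳]

lemma Pr_nonneg (w : Ω → ℝ) (hw0 : ∀ ω, 0 ≤ w ω) (p : Ω → Prop) : 0 ≤ Pr w p := by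
  classical
  apply Finset.sum_nonneg
  intro ω _
  by_cases h : p ω <;> simp [Pr, h, hw0 ω]

lemma Pr_mono (w : Ω → ℝ) (hw0 : ∀ ω, 0 ≤ w ω) {p q : Ω → Prop}
    (h : ∀ ω, p ω → q ω) : Pr w p ≤ Pr w q := by
  classical
  apply Finset.sum_le_sum
  intro ω _
  by_cases hp : p ω
  · simp [hp, h ω hp]
  · by_cases hq : q ω <;> simp [hp, hq, hw0 ω]

lemma Pr_congr (w : Ω → ℝ) {p q : Ω → Prop} (h : ∀ ω, p ω ↔ q ω) :
    Pr w p = Pr w q := by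
  classical
  apply Finset.sum_congr rfl
  intro ω _
  simp only [h ω]

lemma Pr_fiber (w : Ω → ℝ) (X : Ω → 𝒳) (e : 𝒳 → ℝ) (v : ℝ) (p : Ω → Prop) :
    Pr w (fun ω => p ω ∧ e (X ω) = v)
      = ∑ x : 𝒳, if e x = v then Pr w (fun ω => p ω ∧ X ω = x) else 0 := by
  classical
  have key : ∀ x : 𝒳,
      (if e x = v then Pr w (fun ω => p ω ∧ X ω = x) else 0)
        = ∑ ω : Ω, if p ω ∧ X ω = x ∧ e x = v then w ω else 0 := by
    intro x
    by_cases h : e x = v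
    · simp only [h, if_true, Pr]
      apply Finset.sum_congr rfl
      intro ω _
      simp [h]
    · simp [h]
  rw [Finset.sum_congr rfl (fun x _ => key x)]
  simp only [Pr]
  rw [Finset.sum_comm]
  apply Finset.sum_congr rfl
  intro ω _
  rw [Finset.sum_eq_single (X ω)]
  · by_cases hp : p ω <;> by_cases hv : e (X ω) = v <;> simp [hp, hv]
  · intro x _ hx
    simp [Ne.symm hx]
  · simp

end Aux

/-- Rosenbaum–Rubin: if treatment assignment is strongly ignorable given covariates `X`
(with positivity `0 < e(X) < 1`), then it is strongly ignorable given the propensity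
score `e(X)`. -/
theorem ignorability_given_propensity
    {Ω 𝒳 : Type*} [Fintype Ω] [Fintype 𝒳]
    (w : Ω → ℝ) (hw0 : ∀ ω, 0 ≤ w ω) (hw1 : ∑ ω : Ω, w ω = 1)
    (X : Ω → 𝒳) (A : Ω → ℕ) (hA : ∀ ω, A ω = 0 ∨ A ω = 1)
    (Y0 Y1 : Ω → ℝ)
    (e : 𝒳 → ℝ)
    (he : ∀ x : 𝒳, e x = Pr w (fun ω => A ω = 1 ∧ X ω = x) / Pr w (fun ω => X ω = x))
    (positivity : ∀ x : 𝒳, 0 < Pr w (fun ω => X ω = x) → 0 < e x ∧ e x < 1)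
    (ignorability : ∀ (y0 y1 : ℝ) (a : ℕ) (x : 𝒳),
      Pr w (fun ω => Y0 ω = y0 ∧ Y1 ω = y1 ∧ A ω = a ∧ X ω = x)
          * Pr w (fun ω => X ω = x)
        = Pr w (fun ω => Y0 ω = y0 ∧ Y1 ω = y1 ∧ X ω = x)
          * Pr w (fun ω => A ω = a ∧ X ω = x)) :
    ∀ (y0 y1 : ℝ) (a : ℕ) (v : ℝ),
      Pr w (fun ω => Y0 ω = y0 ∧ Y1 ω = y1 ∧ A ω = a ∧ e (X ω) = v)
          * Pr w (fun ω => e (X ω) = v)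
        = Pr w (fun ω => Y0 ω = y0 ∧ Y1 ω = y1 ∧ e (X ω) = v)
          * Pr w (fun ω => A ω = a ∧ e (X ω) = v) := by
  classical
  intro y0 y1 a v
  set c : ℝ := if a = 1 then v else if a = 0 then 1 - v else 0 with hc
  have F1 : ∀ x : 𝒳, e x = v →
      Pr w (fun ω => A ω = a ∧ X ω = x) = c * Pr w (fun ω => X ω = x) := by
    intro x hx
    by_cases hpx : Pr w (fun ω => X ω = x) = 0
    · have h1 : Pr w (fun ω => A ω = a ∧ X ω = x) = 0 :=
        le_antisymm (hpx ▸ Pr_mono w hw0 (fun ω h => h.2)) (Pr_nonneg w hw0 _)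
      simp [h1, hpx]
    · have hA1 : Pr w (fun ω => A ω = 1 ∧ X ω = x) = e x * Pr w (fun ω => X ω = x) := by
        rw [he x]
        field_simp
      have hsplit : Pr w (fun ω => A ω = 0 ∧ X ω = x) + Pr w (fun ω => A ω = 1 ∧ X ω = x)
          = Pr w (fun ω => X ω = x) := by
        unfold Pr
        rw [← Finset.sum_add_distrib]
        apply Finset.sum_congr rfl
        intro ω _
        rcases hA ω with h | h <;> by_cases hX : X ω = x <;> simp [h, hX]
      by_cases ha1 : a = 1
      · subst ha1
        rw [hA1, hx, hc]
        norm_num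
      · by_cases ha0 : a = 0
        · subst ha0
          rw [hc]
          norm_num
          rw [hx] at hA1
          linarith
        · have h1 : Pr w (fun ω => A ω = a ∧ X ω = x) = 0 := by
            unfold Pr
            apply Finset.sum_eq_zero
            intro ω _
            rcases hA ω with h | h <;>
              simp [h, show (0:ℕ) ≠ a from fun hh => ha0 hh.symm,
                show (1:ℕ) ≠ a from fun hh => ha1 hh.symm]
          rw [h1, hc]
          simp [ha1, ha0]
  have F2 : ∀ x : 𝒳, e x = v →
      Pr w (fun ω => Y0 ω = y0 ∧ Y1 ω = y1 ∧ A ω = a ∧ X ω = x)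
        = c * Pr w (fun ω => Y0 ω = y0 ∧ Y1 ω = y1 ∧ X ω = x) := by
    intro x hx
    by_cases hpx : Pr w (fun ω => X ω = x) = 0
    · have h1 : Pr w (fun ω => Y0 ω = y0 ∧ Y1 ω = y1 ∧ A ω = a ∧ X ω = x) = 0 :=
        le_antisymm (hpx ▸ Pr_mono w hw0 (fun ω h => h.2.2.2)) (Pr_nonneg w hw0 _)
      have h2 : Pr w (fun ω => Y0 ω = y0 ∧ Y1 ω = y1 ∧ X ω = x) = 0 :=
        le_antisymm (hpx ▸ Pr_mono w hw0 (fun ω h => h.2.2)) (Pr_nonneg w hw0 _)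
      simp [h1, h2]
    · have key := ignorability y0 y1 a x
      rw [F1 x hx] at key
      apply mul_right_cancel₀ hpx
      rw [key]
      ring
  have hE : Pr w (fun ω => e (X ω) = v)
      = ∑ x : 𝒳, if e x = v then Pr w (fun ω => X ω = x) else 0 := by
    have h := Pr_fiber w X e v (fun _ => True)
    simp only [true_and] at h
    exact h
  have hAE : Pr w (fun ω => A ω = a ∧ e (X ω) = v)
      = c * Pr w (fun ω => e (X ω) = v) := by
    rw [Pr_fiber w X e v (fun ω => A ω = a), hE, Finset.mul_sum]
    apply Finset.sum_congr rfl
    intro x _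
    by_cases h : e x = v
    · simp only [h, if_true]
      exact F1 x h
    · simp [h]
  have hYE : Pr w (fun ω => Y0 ω = y0 ∧ Y1 ω = y1 ∧ A ω = a ∧ e (X ω) = v)
      = c * Pr w (fun ω => Y0 ω = y0 ∧ Y1 ω = y1 ∧ e (X ω) = v) := by
    have h1 : Pr w (fun ω => Y0 ω = y0 ∧ Y1 ω = y1 ∧ A ω = a ∧ e (X ω) = v)
        = Pr w (fun ω => (Y0 ω = y0 ∧ Y1 ω = y1 ∧ A ω = a) ∧ e (X ω) = v) :=
      Pr_congr w (fun ω => by tauto)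
    have h2 : Pr w (fun ω => Y0 ω = y0 ∧ Y1 ω = y1 ∧ e (X ω) = v)
        = Pr w (fun ω => (Y0 ω = y0 ∧ Y1 ω = y1) ∧ e (X ω) = v) :=
      Pr_congr w (fun ω => by tauto)
    rw [h1, h2, Pr_fiber, Pr_fiber, Finset.mul_sum]
    apply Finset.sum_congr rfl
    intro x _
    by_cases h : e x = v
    · simp only [h, if_true]
      have h3 := F2 x h
      have h4 : Pr w (fun ω => (Y0 ω = y0 ∧ Y1 ω = y1 ∧ A ω = a) ∧ X ω = x)
          = Pr w (fun ω => Y0 ω = y0 ∧ Y1 ω = y1 ∧ A ω = a ∧ X ω = x) :=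
        Pr_congr w (fun ω => by tauto)
      have h5 : Pr w (fun ω => (Y0 ω = y0 ∧ Y1 ω = y1) ∧ X ω = x)
          = Pr w (fun ω => Y0 ω = y0 ∧ Y1 ω = y1 ∧ X ω = x) :=
        Pr_congr w (fun ω => by tauto)
      rw [h4, h5, h3]
    · simp [h]
  rw [hYE, hAE]
  ring
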